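/- arXiv:2605.05967 — 3 statements merged into one kernel-verified Lean document; each statement's English description precedes it below -/
import Mathlib

section
/- Let τ > 0 and let (μ_i)_{i≥1} be a non-increasing sequence of nonnegative reals with μ_i ≤ C₁ i^{−s} for some C₁ > 0 and s > 0. Define h_i = μ_i/(τ + μ_i). Then Σ_{i=1}^∞ (h_i / i) ≤ c_s · log(e + C₁/τ) for a constant c_s depending only on s. -/
/-!
Write `h n = μ n / (τ + μ n)` and `R = C₁ / τ`, so that `h n ≤ 1` and `h n ≤ R (n+1)^(-s)`.
Split the series at `N = ⌈(e + R)^(1/s)⌉`: the first `N` terms are at most the harmonic number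
`H_N ≤ 1 + log N ≤ 1 + log 2 + log(e + R) / s`, and since `R ≤ N^s` the remaining terms are at
most `R ∫_N^∞ x^(-s-1) dx = R N^(-s) / s ≤ 1 / s`.
-/

open Real Finset

lemma sum_Ico_rpow_neg_succ_le {s : ℝ} (hs : 0 < s) {N M : ℕ} (hN : 0 < N) (hNM : N ≤ M) :
    ∑ n ∈ Ico N M, ((n : ℝ) + 1) ^ (-(s + 1)) ≤ (N : ℝ) ^ (-s) / s := by
  have hN' : (0 : ℝ) < N := by exact_mod_cast hN
  have hanti : AntitoneOn (fun x : ℝ => x ^ (-(s + 1))) (Set.Icc (N : ℝ) M) :=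
    (antitoneOn_rpow_Ioi_of_exponent_nonpos (by linarith)).mono
      fun x hx => hN'.trans_le hx.1
  have hzero : (0 : ℝ) ∉ Set.uIcc (N : ℝ) M := by
    rw [Set.uIcc_of_le (by exact_mod_cast hNM)]
    exact fun h => hN'.not_ge h.1
  calc ∑ n ∈ Ico N M, ((n : ℝ) + 1) ^ (-(s + 1))
      = ∑ n ∈ Ico N M, (((n + 1 : ℕ) : ℝ)) ^ (-(s + 1)) := by push_cast; rfl
    _ ≤ ∫ x in (N : ℝ)..M, x ^ (-(s + 1)) := hanti.sum_le_integral_Ico hNM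
    _ = ((N : ℝ) ^ (-s) - (M : ℝ) ^ (-s)) / s := by
      rw [integral_rpow (Or.inr ⟨by linarith, hzero⟩), show -(s + 1) + 1 = -s by ring,
        div_neg, ← neg_div, neg_sub]
    _ ≤ (N : ℝ) ^ (-s) / s := by gcongr; exact sub_le_self _ (by positivity)

lemma tsum_le_one_add_log_add_inv {s R : ℝ} (hs : 0 < s) {a : ℕ → ℝ} (ha : ∀ n, 0 ≤ a n)
    (ha_harmonic : ∀ n, a n ≤ ((n : ℝ) + 1)⁻¹)
    (ha_rpow : ∀ n, a n ≤ R * ((n : ℝ) + 1) ^ (-(s + 1)))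
    {N : ℕ} (hN : 0 < N) (hRN : R ≤ (N : ℝ) ^ s) :
    ∑' n, a n ≤ 1 + log N + 1 / s := by
  have head : ∑ n ∈ range N, a n ≤ 1 + log N :=
    calc ∑ n ∈ range N, a n ≤ ∑ n ∈ range N, ((n : ℝ) + 1)⁻¹ :=
          sum_le_sum fun n _ => ha_harmonic n
      _ = harmonic N := by simp [harmonic]
      _ ≤ 1 + log N := harmonic_le_one_add_log N
  have tail (M : ℕ) (hNM : N ≤ M) : ∑ n ∈ Ico N M, a n ≤ 1 / s :=
    calc ∑ n ∈ Ico N M, a n ≤ R * ∑ n ∈ Ico N M, ((n : ℝ) + 1) ^ (-(s + 1)) := by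
          rw [mul_sum]; exact sum_le_sum fun n _ => ha_rpow n
      _ ≤ R * ((N : ℝ) ^ (-s) / s) := by
          gcongr
          · simpa using (ha 0).trans (ha_rpow 0)
          · exact sum_Ico_rpow_neg_succ_le hs hN hNM
      _ = R / (N : ℝ) ^ s * (1 / s) := by rw [rpow_neg (Nat.cast_nonneg N)]; ring
      _ ≤ 1 * (1 / s) := by gcongr; exact div_le_one_of_le₀ hRN (by positivity)
      _ = 1 / s := one_mul _
  refine tsum_le_of_sum_range_le ha fun M => ?_
  calc ∑ n ∈ range M, a n ≤ ∑ n ∈ range (N + M), a n :=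
        sum_le_sum_of_subset_of_nonneg (range_mono (by omega)) fun n _ _ => ha n
    _ = ∑ n ∈ range N, a n + ∑ n ∈ Ico N (N + M), a n := (sum_range_add_sum_Ico a (by omega)).symm
    _ ≤ 1 + log N + 1 / s := add_le_add head (tail _ (by omega))

lemma tsum_div_add_div_succ_le {s τ C : ℝ} (hs : 0 < s) (hτ : 0 < τ) {μ : ℕ → ℝ}
    (hμ : ∀ n, 0 ≤ μ n) (hdecay : ∀ n, μ n ≤ C * ((n : ℝ) + 1) ^ (-s))
    {N : ℕ} (hN : 0 < N) (hCN : C / τ ≤ (N : ℝ) ^ s) :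
    ∑' n, μ n / (τ + μ n) / ((n : ℝ) + 1) ≤ 1 + log N + 1 / s := by
  refine tsum_le_one_add_log_add_inv hs (fun n => ?_) (fun n => ?_) (fun n => ?_) hN hCN
  · have := hμ n; positivity
  · rw [← one_div]
    gcongr
    exact div_le_one_of_le₀ (le_add_of_nonneg_left hτ.le) (by linarith [hμ n])
  · have hn : (0 : ℝ) < n + 1 := by positivity
    have hratio : μ n / (τ + μ n) ≤ C * ((n : ℝ) + 1) ^ (-s) / τ :=
      (div_le_div_of_nonneg_left (hμ n) hτ (by linarith [hμ n])).trans
        (div_le_div_of_nonneg_right (hdecay n) hτ.le)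
    calc μ n / (τ + μ n) / ((n : ℝ) + 1) ≤ C * ((n : ℝ) + 1) ^ (-s) / τ / ((n : ℝ) + 1) := by
          gcongr
      _ = C / τ * ((n : ℝ) + 1) ^ (-(s + 1)) := by
          rw [show -(s + 1) = -s - 1 by ring, rpow_sub_one hn.ne']; ring

lemma log_natCeil_le_log_two_add_log {x : ℝ} (hx : 1 ≤ x) : log ⌈x⌉₊ ≤ log 2 + log x := by
  rw [← log_mul two_ne_zero (by linarith)]
  exact log_le_log (zero_lt_one.trans_le (hx.trans (Nat.le_ceil x)))
    (Nat.ceil_lt_two_mul (by linarith)).le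

/-- If `μ` is non-increasing, nonnegative, with polynomial eigendecay `μ_i ≤ C₁ i^{-s}`
(indexing: `μ n` is the `(n+1)`-st eigenvalue), and `h i = μ i/(τ+μ i)`, then
`∑ h_i / i ≤ c_s · log(e + C₁/τ)` for a constant `c_s` depending only on `s`. -/
theorem spectral_log_sum (s : ℝ) (hs : 0 < s) :
    ∃ c : ℝ, 0 < c ∧
      ∀ (τ C₁ : ℝ) (μ : ℕ → ℝ), 0 < τ → 0 < C₁ →
        (∀ i, 0 ≤ μ i) → Antitone μ →
        (∀ n : ℕ, μ n ≤ C₁ * ((n : ℝ) + 1) ^ (-s)) →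
        (∑' n : ℕ, (μ n / (τ + μ n)) / ((n : ℝ) + 1)) ≤
          c * Real.log (Real.exp 1 + C₁ / τ) := by
  refine ⟨2 + 2 / s, by positivity, fun τ C₁ μ hτ hC₁ hμ _ hdecay => ?_⟩
  set L := log (exp 1 + C₁ / τ)
  have hL : 1 ≤ L := by
    rw [← log_exp 1]
    exact log_le_log (exp_pos 1) (le_add_of_nonneg_right (by positivity))
  set x := (exp 1 + C₁ / τ) ^ s⁻¹
  have hx : 1 ≤ x := one_le_rpow (by linarith [add_one_le_exp 1, div_pos hC₁ hτ]) (by positivity)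
  have hN : 0 < ⌈x⌉₊ := Nat.ceil_pos.mpr (by linarith)
  have hCN : C₁ / τ ≤ (⌈x⌉₊ : ℝ) ^ s :=
    calc C₁ / τ ≤ exp 1 + C₁ / τ := le_add_of_nonneg_left (exp_pos 1).le
      _ = x ^ s := (rpow_inv_rpow (by positivity) hs.ne').symm
      _ ≤ (⌈x⌉₊ : ℝ) ^ s := by gcongr; exact Nat.le_ceil x
  have hlogN : log ⌈x⌉₊ ≤ log 2 + L / s := by
    rw [div_eq_inv_mul, ← log_rpow (by positivity)]
    exact log_natCeil_le_log_two_add_log hx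
  calc ∑' n, μ n / (τ + μ n) / ((n : ℝ) + 1) ≤ 1 + log ⌈x⌉₊ + 1 / s :=
        tsum_div_add_div_succ_le hs hτ hμ hdecay hN hCN
    _ ≤ 1 + (log 2 + L / s) + 1 / s := by gcongr
    _ ≤ (2 + 2 / s) * L := by
        have hinv : 1 / s ≤ L / s := by gcongr
        have hlog2 : log 2 ≤ 1 := by linarith [log_two_lt_d9]
        rw [show (2 + 2 / s) * L = 2 * L + 2 * (L / s) by ring]
        linarith
end

section
/- Consider the dyadic splitting process on [−1,1]^m with splitting threshold parameter b > 0: a region of side 2^{−ℓ} splits into 2^m subregions once it has received 2^{bℓ} queries. After n total queries, the number of regions that have ever split is at most 4^m · n^{m/(m+b)}, and the total number of regions ever created is at most 9^m · n^{m/(m+b)}. -/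
/-!
Cut the depths at the level `L` where `2^L ≈ n^{1/(m+b)}`. Up to depth `L` the geometric
bound `K ℓ ≤ 2^{mℓ}` gives at most `2·2^{mL} ≤ 2 n^{m/(m+b)}` splits. Below depth `L` every split
costs at least `2^{b(L+1)} ≥ n^{b/(m+b)}` queries, so the budget `n` allows at most
`n^{m/(m+b)}` of them. Hence at most `3 n^{m/(m+b)}` regions split.
-/

theorem geom_sum_le_two_mul_pow {R : Type*} [Semiring R] [PartialOrder R] [IsOrderedRing R]
    {c : R} (hc : 2 ≤ c) (L : ℕ) : ∑ ℓ ∈ Finset.range (L + 1), c ^ ℓ ≤ 2 * c ^ L := by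
  induction L with
  | zero => simp [one_le_two]
  | succ L ih =>
    have hcL : 2 * c ^ L ≤ c * c ^ L :=
      mul_le_mul_of_nonneg_right hc (pow_nonneg (zero_le_two.trans hc) L)
    calc ∑ ℓ ∈ Finset.range (L + 2), c ^ ℓ = ∑ ℓ ∈ Finset.range (L + 1), c ^ ℓ + c * c ^ L := by
          rw [Finset.sum_range_succ, pow_succ']
      _ ≤ c * c ^ L + c * c ^ L := by gcongr; exact ih.trans hcL
      _ = 2 * c ^ (L + 1) := by rw [← two_mul, pow_succ']

theorem mul_tsum_nat_add_le_tsum_mul {f w : ℕ → ℝ} {a : ℝ} (N : ℕ) (hf : ∀ ℓ, 0 ≤ f ℓ)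
    (hw : ∀ ℓ, N ≤ ℓ → a ≤ w ℓ) (hw0 : ∀ ℓ, 0 ≤ w ℓ) (hf_sum : Summable f)
    (hwf_sum : Summable fun ℓ => w ℓ * f ℓ) :
    a * ∑' ℓ, f (ℓ + N) ≤ ∑' ℓ, w ℓ * f ℓ :=
  calc a * ∑' ℓ, f (ℓ + N) = ∑' ℓ, a * f (ℓ + N) := tsum_mul_left.symm
    _ ≤ ∑' ℓ, w (ℓ + N) * f (ℓ + N) :=
      Summable.tsum_le_tsum (fun _ => mul_le_mul_of_nonneg_right (hw _ le_add_self) (hf _))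
        (((summable_nat_add_iff N).2 hf_sum).mul_left a) ((summable_nat_add_iff N).2 hwf_sum)
    _ ≤ ∑' ℓ, w ℓ * f ℓ :=
      tsum_comp_le_tsum_of_inj hwf_sum (fun ℓ => mul_nonneg (hw0 ℓ) (hf ℓ)) (add_left_injective N)

theorem exists_level_pow_le_rpow_and_le_rpow_mul (m : ℕ) {b n : ℝ} (hb : 0 < b) (hn : 1 ≤ n) :
    ∃ L : ℕ, ((2 : ℝ) ^ m) ^ L ≤ n ^ ((m : ℝ) / (m + b)) ∧
      n ≤ (2 : ℝ) ^ (b * ((L + 1 : ℕ) : ℝ)) * n ^ ((m : ℝ) / (m + b)) := by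
  have hmb : (m : ℝ) + b ≠ 0 := by positivity
  set t := n ^ ((m + b)⁻¹ : ℝ)
  have ht : 1 ≤ t := Real.one_le_rpow hn (by positivity)
  have htm : t ^ m = n ^ ((m : ℝ) / (m + b)) := by
    rw [← Real.rpow_natCast, ← Real.rpow_mul (by positivity), inv_mul_eq_div]
  have hn_eq : n = t ^ b * t ^ m := by
    rw [← Real.rpow_natCast, ← Real.rpow_add (by positivity), ← Real.rpow_mul (by positivity),
      add_comm b, inv_mul_cancel₀ hmb, Real.rpow_one]
  obtain ⟨L, hLt, htL⟩ := exists_nat_pow_near ht one_lt_two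
  refine ⟨L, ?_, ?_⟩
  · calc ((2 : ℝ) ^ m) ^ L = ((2 : ℝ) ^ L) ^ m := by rw [← pow_mul, ← pow_mul, mul_comm]
      _ ≤ t ^ m := pow_le_pow_left₀ (by positivity) hLt m
      _ = _ := htm
  · calc n = t ^ b * t ^ m := hn_eq
      _ ≤ ((2 : ℝ) ^ (L + 1)) ^ b * t ^ m := by gcongr
      _ = _ := by rw [htm, mul_comm b, Real.rpow_natCast_mul zero_le_two]

theorem tsum_le_three_mul_rpow {m : ℕ} (hm : 1 ≤ m) {b n : ℝ} (hb : 0 < b) (hn : 1 ≤ n)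
    {K : ℕ → ℝ} (hK0 : ∀ ℓ, 0 ≤ K ℓ) (hK : ∀ ℓ, K ℓ ≤ ((2 : ℝ) ^ m) ^ ℓ)
    (hsum : Summable fun ℓ : ℕ => (2 : ℝ) ^ (b * ℓ) * K ℓ)
    (hbudget : ∑' ℓ : ℕ, (2 : ℝ) ^ (b * ℓ) * K ℓ ≤ n) :
    ∑' ℓ, K ℓ ≤ 3 * n ^ ((m : ℝ) / (m + b)) := by
  set A := n ^ ((m : ℝ) / (m + b))
  obtain ⟨L, hhead_level, htail_level⟩ := exists_level_pow_le_rpow_and_le_rpow_mul m hb hn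
  have hKsum : Summable K := hsum.of_nonneg_of_le hK0 fun ℓ =>
    le_mul_of_one_le_left (hK0 ℓ) (Real.one_le_rpow one_le_two (by positivity))
  have hhead : ∑ ℓ ∈ Finset.range (L + 1), K ℓ ≤ 2 * A :=
    calc ∑ ℓ ∈ Finset.range (L + 1), K ℓ ≤ ∑ ℓ ∈ Finset.range (L + 1), ((2 : ℝ) ^ m) ^ ℓ :=
          Finset.sum_le_sum fun ℓ _ => hK ℓ
      _ ≤ 2 * ((2 : ℝ) ^ m) ^ L :=
          geom_sum_le_two_mul_pow (le_self_pow₀ one_le_two (by omega)) L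
      _ ≤ 2 * A := by gcongr
  have htail : ∑' ℓ, K (ℓ + (L + 1)) ≤ A := by
    refine le_of_mul_le_mul_left ?_ (by positivity : 0 < (2 : ℝ) ^ (b * ((L + 1 : ℕ) : ℝ)))
    refine (mul_tsum_nat_add_le_tsum_mul (L + 1) hK0 (fun _ hℓ => ?_) (fun _ => by positivity)
      hKsum hsum).trans (hbudget.trans htail_level)
    exact Real.rpow_le_rpow_of_exponent_le one_le_two (by gcongr)
  rw [← hKsum.sum_add_tsum_nat_add (L + 1)]
  linarith

/-- Region-count bound for the dyadic splitting process on `[-1,1]^m`: if `K ℓ` is the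
number of depth-`ℓ` regions (side `2^{-ℓ}`) that have ever split, then the geometry gives
`K ℓ ≤ 2^{mℓ}` and, since splitting a depth-`ℓ` region requires `2^{bℓ}` queries and
there are `n` queries in total, `∑ 2^{bℓ} K ℓ ≤ n`. Under these constraints, the number
of regions that have ever split satisfies `∑ K ℓ ≤ 4^m n^{m/(m+b)}`, and the total number
of regions ever created — the initial region plus the `2^m` children of each split —
is at most `9^m n^{m/(m+b)}`. -/
theorem dyadic_splitting_region_count (m : ℕ) (hm : 1 ≤ m) (b : ℝ) (hb : 0 < b)
    (n : ℕ) (hn : 1 ≤ n)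
    (K : ℕ → ℕ) (hK0 : K 0 = 0)
    (hKle : ∀ ℓ : ℕ, 1 ≤ ℓ → (K ℓ : ℝ) ≤ 2 ^ (m * ℓ))
    (hbudget_sum : Summable (fun ℓ : ℕ => (2 : ℝ) ^ (b * ℓ) * K ℓ))
    (hbudget : (∑' ℓ : ℕ, (2 : ℝ) ^ (b * ℓ) * K ℓ) ≤ n) :
    (∑' ℓ : ℕ, (K ℓ : ℝ)) ≤ 4 ^ m * (n : ℝ) ^ ((m : ℝ) / (m + b)) ∧
      1 + 2 ^ m * (∑' ℓ : ℕ, (K ℓ : ℝ)) ≤ 9 ^ m * (n : ℝ) ^ ((m : ℝ) / (m + b)) := by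
  have hn' : (1 : ℝ) ≤ n := by exact_mod_cast hn
  have hK : ∀ ℓ, (K ℓ : ℝ) ≤ ((2 : ℝ) ^ m) ^ ℓ
    | 0 => by simp [hK0]
    | ℓ + 1 => (hKle _ ℓ.succ_pos).trans_eq (pow_mul _ _ _)
  have hsplit := tsum_le_three_mul_rpow hm hb hn' (fun ℓ => Nat.cast_nonneg _) hK
    hbudget_sum hbudget
  set A := (n : ℝ) ^ ((m : ℝ) / (m + b))
  have hA : 1 ≤ A := Real.one_le_rpow hn' (by positivity)
  have h34 : (3 : ℝ) ≤ 4 ^ m := le_trans (by norm_num) (le_self_pow₀ (by norm_num) (by omega))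
  have h89 : (2 : ℝ) ^ m * 4 ^ m + 1 ≤ 9 ^ m := by
    rw [← mul_pow]
    exact_mod_cast Nat.pow_lt_pow_left (by norm_num : 2 * 4 < 9) (by omega)
  have hfirst : ∑' ℓ, (K ℓ : ℝ) ≤ 4 ^ m * A := hsplit.trans (by gcongr)
  refine ⟨hfirst, ?_⟩
  calc 1 + 2 ^ m * ∑' ℓ, (K ℓ : ℝ) ≤ A + 2 ^ m * (4 ^ m * A) := by gcongr
    _ ≤ 9 ^ m * A := by nlinarith
end

section
/- Let K_ℓ (ℓ ≥ 1) be nonnegative integers with K_ℓ ≤ 2^{mℓ} and Σ_{ℓ≥1} 2^{bℓ} K_ℓ ≤ n, where m, b > 0 and n ≥ 1. Then Σ_{ℓ≥1} K_ℓ ≤ 4^m · n^{m/(m+b)}. -/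
private lemma geom_sum_le_pow (r : ℝ) (hr : 2 ≤ r) (L : ℕ) :
    ∑ i ∈ Finset.range L, r ^ i ≤ r ^ L := by
  induction L with
  | zero => simp
  | succ L ih =>
    rw [Finset.sum_range_succ, pow_succ]
    have h0 : (0:ℝ) ≤ r ^ L := pow_nonneg (by linarith) L
    nlinarith


/-- Combinatorial core of the region-count bound: if `K ℓ ≤ 2^{mℓ}` for `ℓ ≥ 1`,
`K 0 = 0`, and `∑ 2^{bℓ} K ℓ ≤ n`, then `∑ K ℓ ≤ 4^m n^{m/(m+b)}`. -/
theorem region_count_optimization (m : ℕ) (hm : 0 < m) (b : ℝ) (hb : 0 < b)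
    (n : ℕ) (hn : 1 ≤ n) (K : ℕ → ℕ) (hK0 : K 0 = 0)
    (hKle : ∀ ℓ : ℕ, 1 ≤ ℓ → (K ℓ : ℝ) ≤ 2 ^ (m * ℓ))
    (hbudget_sum : Summable (fun ℓ : ℕ => (2 : ℝ) ^ (b * ℓ) * K ℓ))
    (hbudget : (∑' ℓ : ℕ, (2 : ℝ) ^ (b * ℓ) * K ℓ) ≤ n) :
    (∑' ℓ : ℕ, (K ℓ : ℝ)) ≤ 4 ^ m * (n : ℝ) ^ ((m : ℝ) / (m + b)) := by
  have hmb : (0:ℝ) < (m:ℝ) + b := by positivity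
  have hmR : (1:ℝ) ≤ (m:ℝ) := by exact_mod_cast hm
  set L : ℕ := ⌈Real.logb 2 n / ((m:ℝ) + b)⌉₊ with hLdef
  have hnpos : (0:ℝ) < n := by exact_mod_cast hn
  have hlog0 : 0 ≤ Real.logb 2 n := Real.logb_nonneg (by norm_num) (by exact_mod_cast hn)
  -- Fact A : n ≤ 2^((m+b)L)
  have hA : (n : ℝ) ≤ (2:ℝ) ^ (((m:ℝ) + b) * L) := by
    have h1 : Real.logb 2 n ≤ ((m:ℝ) + b) * L := by
      have h2 := Nat.le_ceil (Real.logb 2 n / ((m:ℝ) + b))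
      rw [div_le_iff₀ hmb] at h2
      linarith [h2]
    calc (n:ℝ) = (2:ℝ) ^ Real.logb 2 n := (Real.rpow_logb (by norm_num) (by norm_num) hnpos).symm
      _ ≤ (2:ℝ) ^ (((m:ℝ) + b) * L) := Real.rpow_le_rpow_of_exponent_le (by norm_num) h1
  -- Fact B : L ≤ logb 2 n / (m+b) + 1
  have hB : (L:ℝ) ≤ Real.logb 2 n / ((m:ℝ) + b) + 1 :=
    (Nat.ceil_lt_add_one (by positivity)).le
  -- budget terms nonneg
  have hgnn : ∀ ℓ : ℕ, 0 ≤ (2:ℝ) ^ (b * ℓ) * K ℓ := fun ℓ => by positivity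
  have hone_le : ∀ ℓ : ℕ, (1:ℝ) ≤ (2:ℝ) ^ (b * ℓ) := fun ℓ => by
    apply Real.one_le_rpow (by norm_num) (by positivity)
  have hKsum : Summable (fun ℓ : ℕ => (K ℓ : ℝ)) := by
    apply Summable.of_nonneg_of_le (fun ℓ => by positivity) (fun ℓ => ?_) hbudget_sum
    exact le_mul_of_one_le_left (by positivity) (hone_le ℓ)
  -- split
  have hsplit := (Summable.sum_add_tsum_nat_add L hKsum).symm
  -- head bound
  have hhead : ∑ i ∈ Finset.range L, (K i : ℝ) ≤ (2:ℝ) ^ ((m:ℝ) * L) := by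
    have h1 : ∑ i ∈ Finset.range L, (K i : ℝ) ≤ ∑ i ∈ Finset.range L, ((2:ℝ) ^ m) ^ i := by
      apply Finset.sum_le_sum
      intro i _
      rcases Nat.eq_zero_or_pos i with h | h
      · simp [h, hK0]
      · have := hKle i h
        rwa [pow_mul] at this
    have h2 := geom_sum_le_pow ((2:ℝ)^m) (by
      calc (2:ℝ) = 2^1 := by norm_num
        _ ≤ 2^m := pow_le_pow_right₀ (by norm_num) hm) L
    have h3 : ((2:ℝ)^m)^L = (2:ℝ) ^ ((m:ℝ) * L) := by
      rw [← pow_mul, ← Real.rpow_natCast 2 (m*L)]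
      push_cast
      ring_nf
    linarith [h1, h2, h3.le, h3.ge]
  -- tail bound
  have htail : (∑' i : ℕ, (K (i + L) : ℝ)) ≤ (2:ℝ) ^ ((m:ℝ) * L) := by
    have hshift : Summable (fun i : ℕ => (2:ℝ) ^ (b * ((i + L : ℕ) : ℝ)) * K (i + L)) :=
      (summable_nat_add_iff (f := fun ℓ : ℕ => (2:ℝ) ^ (b * ℓ) * K ℓ) L).mpr hbudget_sum
    have hcmp : ∀ i : ℕ, (K (i + L) : ℝ) ≤
        (2:ℝ) ^ (-(b * L)) * ((2:ℝ) ^ (b * ((i + L : ℕ) : ℝ)) * K (i + L)) := by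
      intro i
      rw [← mul_assoc, ← Real.rpow_add (by norm_num)]
      apply le_mul_of_one_le_left (by positivity)
      apply Real.one_le_rpow (by norm_num)
      have : (0:ℝ) ≤ b * i := by positivity
      push_cast
      nlinarith
    calc (∑' i : ℕ, (K (i + L) : ℝ))
        ≤ ∑' i : ℕ, (2:ℝ) ^ (-(b * L)) * ((2:ℝ) ^ (b * ((i + L : ℕ) : ℝ)) * K (i + L)) := by
          apply Summable.tsum_le_tsum hcmp ((summable_nat_add_iff (f := fun ℓ : ℕ => (K ℓ : ℝ)) L).mpr hKsum) (hshift.mul_left _)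
      _ = (2:ℝ) ^ (-(b * L)) * ∑' i : ℕ, (2:ℝ) ^ (b * ((i + L : ℕ) : ℝ)) * K (i + L) := tsum_mul_left
      _ ≤ (2:ℝ) ^ (-(b * L)) * n := by
          apply mul_le_mul_of_nonneg_left _ (by positivity)
          have h4 := Summable.sum_add_tsum_nat_add L hbudget_sum
          have h5 : 0 ≤ ∑ i ∈ Finset.range L, (2:ℝ) ^ (b * i) * K i :=
            Finset.sum_nonneg fun i _ => hgnn i
          push_cast at h4 ⊢
          linarith [hbudget, h4.le, h4.ge]
      _ ≤ (2:ℝ) ^ (-(b * L)) * (2:ℝ) ^ (((m:ℝ) + b) * L) := by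
          apply mul_le_mul_of_nonneg_left hA (by positivity)
      _ = (2:ℝ) ^ ((m:ℝ) * L) := by
          rw [← Real.rpow_add (by norm_num)]
          ring_nf
  -- combine
  have htot : (∑' ℓ : ℕ, (K ℓ : ℝ)) ≤ 2 * (2:ℝ) ^ ((m:ℝ) * L) := by
    rw [hsplit]; linarith
  have hfin : 2 * (2:ℝ) ^ ((m:ℝ) * L) ≤ 4 ^ m * (n : ℝ) ^ ((m : ℝ) / ((m:ℝ) + b)) := by
    have e1 : 2 * (2:ℝ) ^ ((m:ℝ) * L) ≤ (2:ℝ) ^ ((m:ℝ) * (L + 1)) := by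
      rw [mul_add, Real.rpow_add (by norm_num), mul_comm]
      apply mul_le_mul_of_nonneg_left _ (by positivity)
      calc (2:ℝ) = 2 ^ (1:ℝ) := (Real.rpow_one 2).symm
        _ ≤ 2 ^ ((m:ℝ) * 1) := Real.rpow_le_rpow_of_exponent_le (by norm_num) (by linarith)
    have e2 : (2:ℝ) ^ ((m:ℝ) * (L + 1)) ≤
        (2:ℝ) ^ ((m:ℝ) * (Real.logb 2 n / ((m:ℝ) + b) + 2)) := by
      apply Real.rpow_le_rpow_of_exponent_le (by norm_num)
      have : (L:ℝ) + 1 ≤ Real.logb 2 n / ((m:ℝ) + b) + 2 := by linarith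
      nlinarith [hmR, this]
    have e3 : (2:ℝ) ^ ((m:ℝ) * (Real.logb 2 n / ((m:ℝ) + b) + 2)) =
        4 ^ m * (n : ℝ) ^ ((m : ℝ) / ((m:ℝ) + b)) := by
      rw [mul_add, Real.rpow_add (by norm_num)]
      have h4 : (2:ℝ) ^ ((m:ℝ) * 2) = 4 ^ m := by
        rw [show ((m:ℝ) * 2) = ((2 * m : ℕ) : ℝ) by push_cast; ring,
          Real.rpow_natCast, pow_mul]
        norm_num
      have hn' : (2:ℝ) ^ ((m:ℝ) * (Real.logb 2 n / ((m:ℝ) + b))) =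
          (n : ℝ) ^ ((m : ℝ) / ((m:ℝ) + b)) := by
        rw [show (m:ℝ) * (Real.logb 2 n / ((m:ℝ) + b)) =
          Real.logb 2 n * ((m:ℝ) / ((m:ℝ) + b)) by ring,
          Real.rpow_mul (by norm_num), Real.rpow_logb (by norm_num) (by norm_num) hnpos]
      rw [h4, hn']
      ring
    linarith
  linarith
end
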